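/- arXiv:2309.09916 — 2 statements merged into one kernel-verified Lean document; each statement's English description precedes it below -/
import Mathlib

section
/- If C : [0,1]^d → [0,1] is a copula and F_1, ..., F_d are univariate cumulative distribution functions, then the function F(y_1,...,y_d) := C(F_1(y_1),...,F_d(y_d)) is a valid multivariate cumulative distribution function on ℝ^d whose j-th marginal distribution function equals F_j. -/
/-!
For a CDF `F`, the generalized inverse `Q u = inf {x | u ≤ F x}` satisfies
`Q u ≤ y ↔ u ≤ F y` for `u ∈ (0,1)`, by right-continuity of `F`. If `U` has coordinates
uniform on `[0,1]` (hence a.s. in `(0,1)`), then `X j = Q_j (U j)` satisfies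
`{X ≤ y} = {U ≤ (F_j (y_j))_j}` almost surely, so the law of `X` has CDF `C ∘ F` and
marginals `P(U_j ≤ F_j t) = F_j t`.
-/

open MeasureTheory Set Filter

/-- Outside `(0,1)` this is a junk value: the infimum of `univ` or of `∅`, i.e. `0`. -/
noncomputable def quantile (F : ℝ → ℝ) (u : ℝ) : ℝ := sInf {x | u ≤ F x}

section Quantile

variable {F : ℝ → ℝ} {u : ℝ}

lemma nonempty_setOf_le_of_tendsto_atTop (htop : Tendsto F atTop (nhds 1)) (hu : u < 1) :
    {x | u ≤ F x}.Nonempty :=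
  ((htop.eventually (eventually_gt_nhds hu)).exists).imp fun _ hx => hx.le

lemma bddBelow_setOf_le_of_tendsto_atBot (hbot : Tendsto F atBot (nhds 0)) (hu : 0 < u) :
    BddBelow {x | u ≤ F x} := by
  obtain ⟨a, ha⟩ := eventually_atBot.1 (hbot.eventually (eventually_lt_nhds hu))
  exact ⟨a, fun x hx => le_of_not_ge fun hxa => (ha x hxa).not_ge hx⟩

lemma quantile_le_iff (hmono : Monotone F) (hrc : ∀ x, ContinuousWithinAt F (Ici x) x)
    (hbot : Tendsto F atBot (nhds 0)) (htop : Tendsto F atTop (nhds 1))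
    (hu : u ∈ Ioo 0 1) (y : ℝ) : quantile F u ≤ y ↔ u ≤ F y := by
  have hne := nonempty_setOf_le_of_tendsto_atTop htop hu.2
  have hbdd := bddBelow_setOf_le_of_tendsto_atBot hbot hu.1
  refine ⟨fun h => le_trans ?_ (hmono h), fun h => csInf_le hbdd h⟩
  exact ContinuousWithinAt.closure_le (csInf_mem_closure hne hbdd) continuousWithinAt_const
    ((hrc _).mono fun x hx => csInf_le hbdd hx) fun _ hx => hx

lemma monotoneOn_quantile (hbot : Tendsto F atBot (nhds 0)) (htop : Tendsto F atTop (nhds 1)) :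
    MonotoneOn (quantile F) (Ioo 0 1) := fun _ hu _ hv huv =>
  csInf_le_csInf (bddBelow_setOf_le_of_tendsto_atBot hbot hu.1)
    (nonempty_setOf_le_of_tendsto_atTop htop hv.2) fun _ hx => huv.trans hx

end Quantile

section Uniform

variable {Ω : Type*} [MeasurableSpace Ω] {ℙ : Measure Ω} {V : Ω → ℝ}

lemma ae_mem_Ioo_of_map_eq_uniform (hV : AEMeasurable V ℙ)
    (hunif : ℙ.map V = volume.restrict (Icc 0 1)) : ∀ᵐ ω ∂ℙ, V ω ∈ Ioo 0 1 := by
  refine ae_of_ae_map hV ?_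
  rw [hunif, ← Measure.restrict_congr_set Ioo_ae_eq_Icc]
  exact ae_restrict_mem measurableSet_Ioo

lemma measure_le_of_map_eq_uniform (hV : AEMeasurable V ℙ)
    (hunif : ℙ.map V = volume.restrict (Icc 0 1)) {t : ℝ} (ht : t ≤ 1) :
    ℙ {ω | V ω ≤ t} = ENNReal.ofReal t := by
  have hIic : Iic t ∩ Icc 0 1 = Icc 0 t := by
    ext x
    simp only [mem_inter_iff, mem_Iic, mem_Icc]
    exact ⟨fun h => ⟨h.2.1, h.1⟩, fun h => ⟨h.2, h.1, h.2.trans ht⟩⟩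
  change ℙ (V ⁻¹' Iic t) = _
  rw [← Measure.map_apply_of_aemeasurable hV measurableSet_Iic, hunif,
    Measure.restrict_apply measurableSet_Iic, hIic, Real.volume_Icc, sub_zero]

lemma aemeasurable_quantile_comp_of_map_eq_uniform (hV : AEMeasurable V ℙ)
    (hunif : ℙ.map V = volume.restrict (Icc 0 1)) {F : ℝ → ℝ}
    (hbot : Tendsto F atBot (nhds 0)) (htop : Tendsto F atTop (nhds 1)) :
    AEMeasurable (fun ω => quantile F (V ω)) ℙ := by
  have hQ := aemeasurable_restrict_of_monotoneOn (μ := volume) measurableSet_Ioo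
    (monotoneOn_quantile hbot htop)
  rw [Measure.restrict_congr_set Ioo_ae_eq_Icc, ← hunif] at hQ
  exact hQ.comp_aemeasurable hV

end Uniform

/-- **Sklar's theorem (construction direction).**
If `C` is a `d`-variate copula (the joint CDF of a random vector `U` whose
coordinates are each uniformly distributed on `[0,1]`) and `F 1, …, F d` are
univariate cumulative distribution functions (monotone, right-continuous,
with limits `0` at `-∞` and `1` at `+∞`), then
`y ↦ C (F 1 (y 1), …, F d (y d))` is a valid multivariate cumulative
distribution function on `ℝ^d`: there is a probability measure `μ` on `ℝ^d`
whose joint CDF is this function, and whose `j`-th marginal CDF is `F j`. -/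
theorem sklar_construction
    (d : ℕ) (C : (Fin d → ℝ) → ℝ)
    (Ω : Type) [MeasurableSpace Ω] (ℙ : Measure Ω) [IsProbabilityMeasure ℙ]
    (U : Fin d → Ω → ℝ)
    (hUmeas : ∀ j, Measurable (U j))
    (hUunif : ∀ j, Measure.map (U j) ℙ = volume.restrict (Icc (0:ℝ) 1))
    (hC : ∀ u : Fin d → ℝ, C u = (ℙ {ω | ∀ j, U j ω ≤ u j}).toReal)
    (F : Fin d → ℝ → ℝ)
    (hFmono : ∀ j, Monotone (F j))
    (hFrc : ∀ j x, ContinuousWithinAt (F j) (Ici x) x)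
    (hFbot : ∀ j, Filter.Tendsto (F j) Filter.atBot (nhds 0))
    (hFtop : ∀ j, Filter.Tendsto (F j) Filter.atTop (nhds 1)) :
    ∃ μ : Measure (Fin d → ℝ), IsProbabilityMeasure μ ∧
      (∀ y : Fin d → ℝ,
        μ {x | ∀ j, x j ≤ y j} = ENNReal.ofReal (C (fun j => F j (y j)))) ∧
      (∀ j : Fin d, ∀ t : ℝ,
        μ {x | x j ≤ t} = ENNReal.ofReal (F j t)) := by
  set X : Ω → Fin d → ℝ := fun ω j => quantile (F j) (U j ω)
  have hX : AEMeasurable X ℙ := aemeasurable_pi_lambda _ fun j =>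
    aemeasurable_quantile_comp_of_map_eq_uniform (hUmeas j).aemeasurable (hUunif j)
      (hFbot j) (hFtop j)
  have hXU : ∀ᵐ ω ∂ℙ, ∀ j y, X ω j ≤ y ↔ U j ω ≤ F j y := ae_all_iff.2 fun j => by
    filter_upwards [ae_mem_Ioo_of_map_eq_uniform (hUmeas j).aemeasurable (hUunif j)] with ω hω
    exact quantile_le_iff (hFmono j) (hFrc j) (hFbot j) (hFtop j) hω
  refine ⟨ℙ.map X, Measure.isProbabilityMeasure_map hX, fun y => ?_, fun j t => ?_⟩
  · change ℙ.map X (Iic y) = _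
    rw [Measure.map_apply_of_aemeasurable hX measurableSet_Iic, hC,
      ENNReal.ofReal_toReal (measure_ne_top _ _)]
    refine measure_congr (eventuallyEq_set.2 ?_)
    filter_upwards [hXU] with ω hω using forall_congr' fun j => hω j (y j)
  · rw [Measure.map_apply_of_aemeasurable hX (measurableSet_le (measurable_pi_apply j)
      measurable_const), ← measure_le_of_map_eq_uniform (hUmeas j).aemeasurable (hUunif j)
      ((hFmono j).ge_of_tendsto (hFtop j) t)]
    refine measure_congr (eventuallyEq_set.2 ?_)
    filter_upwards [hXU] with ω hω using hω j t
end

section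
/- With ranks as above forming a permutation of {1,...,n} in each dimension, the j-th marginal of the empirical beta copula is exactly the uniform distribution on [0,1]: for every u ∈ [0,1], (1/n) Σ_{i=1}^{n} F_{n,r_{i,j}}(u) = u, where F_{n,r}(u) = Σ_{p=r}^{n} C(n,p) u^p (1−u)^{n−p}. -/
/-!
The ranks of distinct observations are a permutation of `{1, …, n}`, so the sum over `i` is
`∑_{r=1}^n F_{n,r}(u)`. Exchanging the two summations, the Bernstein term
`C(n,p) u^p (1-u)^{n-p}` is counted once for each `r ≤ p`, and the sum becomes
`∑_p p · C(n,p) u^p (1-u)^{n-p} = n u`, the mean of the binomial distribution.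
-/

open Finset

/-- The CDF of the `Beta (r, n - r + 1)` distribution, written as the binomial
tail sum `F_{n,r}(u) = ∑_{p=r}^{n} C(n,p) u^p (1-u)^{n-p}`. -/
noncomputable def betaTailCdf (n r : ℕ) (u : ℝ) : ℝ :=
  ∑ p ∈ Finset.Icc r n, (n.choose p : ℝ) * u ^ p * (1 - u) ^ (n - p)

theorem sum_Icc_one_sum_Icc_eq_sum_range_nsmul {M : Type*} [AddCommMonoid M] (n : ℕ)
    (f : ℕ → M) :
    ∑ r ∈ Icc 1 n, ∑ p ∈ Icc r n, f p = ∑ p ∈ range (n + 1), p • f p := by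
  rw [sum_comm' (t' := Icc 1 n) (s' := fun p => Icc 1 p)
    (h := fun r p => by simp only [mem_Icc]; omega)]
  simp only [sum_const, Nat.card_Icc, add_tsub_cancel_right]
  rw [range_eq_Ico, sum_eq_sum_Ico_succ_bot (by omega), zero_smul, zero_add,
    Ico_add_one_right_eq_Icc]

theorem betaTailCdf_eq_sum_bernsteinPolynomial (n r : ℕ) (u : ℝ) :
    betaTailCdf n r u = ∑ p ∈ Icc r n, (bernsteinPolynomial ℝ n p).eval u := by
  simp [betaTailCdf, bernsteinPolynomial]

theorem sum_betaTailCdf (n : ℕ) (u : ℝ) : ∑ r ∈ Icc 1 n, betaTailCdf n r u = n * u := by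
  simp_rw [betaTailCdf_eq_sum_bernsteinPolynomial, sum_Icc_one_sum_Icc_eq_sum_range_nsmul,
    ← Polynomial.eval_smul, ← Polynomial.eval_finsetSum, bernsteinPolynomial.sum_smul]
  simp

section Rank

variable {ι α : Type*} [Fintype ι] [LinearOrder α] {y : ι → α}

theorem card_filter_le_lt_of_lt {i j : ι} (h : y i < y j) :
    #{k | y k ≤ y i} < #{k | y k ≤ y j} := by
  refine card_lt_card ((ssubset_iff_of_subset ?_).2 ⟨j, by simp, by simpa using h⟩)
  intro k hk
  simp only [mem_filter, mem_univ, true_and] at hk ⊢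
  exact hk.trans h.le

theorem injective_card_filter_le (hy : Function.Injective y) :
    Function.Injective fun i => #{k | y k ≤ y i} := by
  intro i j hij
  by_contra hne
  rcases lt_or_gt_of_ne (hy.ne hne) with h | h
  · exact (card_filter_le_lt_of_lt h).ne hij
  · exact (card_filter_le_lt_of_lt h).ne' hij

theorem card_filter_le_mem_Icc (i : ι) : #{k | y k ≤ y i} ∈ Icc 1 (Fintype.card ι) :=
  mem_Icc.2 ⟨card_pos.2 ⟨i, by simp⟩, card_le_univ _⟩

theorem image_card_filter_le (hy : Function.Injective y) :
    univ.image (fun i => #{k | y k ≤ y i}) = Icc 1 (Fintype.card ι) := by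
  refine eq_of_subset_of_card_le (fun r hr => ?_) ?_
  · obtain ⟨i, -, rfl⟩ := mem_image.1 hr
    exact card_filter_le_mem_Icc i
  · rw [card_image_of_injective _ (injective_card_filter_le hy)]
    simp

theorem sum_comp_card_filter_le {M : Type*} [AddCommMonoid M] (hy : Function.Injective y)
    (g : ℕ → M) : ∑ i, g #{k | y k ≤ y i} = ∑ r ∈ Icc 1 (Fintype.card ι), g r := by
  rw [← image_card_filter_le hy, sum_image fun i _ j _ h => injective_card_filter_le hy h]

end Rank

theorem empirical_beta_copula_marginal_general
    (n : ℕ) (hn : 0 < n) (y : Fin n → ℝ) (hy : Function.Injective y)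
    (u : ℝ) :
    (1 / (n : ℝ)) * ∑ i : Fin n,
        betaTailCdf n (({k : Fin n | y k ≤ y i} : Finset (Fin n)).card) u
      = u := by
  rw [sum_comp_card_filter_le hy (betaTailCdf n · u), Fintype.card_fin, sum_betaTailCdf]
  field_simp

/-- **The empirical beta copula has uniform margins.**
With distinct observations `y 1, …, y n` in dimension `j`, whose ranks
`r i = #{k : y k ≤ y i}` form a permutation of `{1,…,n}`, the `j`-th marginal
of the empirical beta copula is exactly the uniform distribution on `[0,1]`:
for every `u ∈ [0,1]`, `(1/n) ∑ᵢ F_{n, r i}(u) = u`. -/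
theorem empirical_beta_copula_marginal
    (n : ℕ) (hn : 0 < n) (y : Fin n → ℝ) (hy : Function.Injective y)
    (u : ℝ) (hu : u ∈ Set.Icc (0:ℝ) 1) :
    (1 / (n : ℝ)) * ∑ i : Fin n,
        betaTailCdf n (({k : Fin n | y k ≤ y i} : Finset (Fin n)).card) u
      = u :=
  empirical_beta_copula_marginal_general n hn y hy u
end
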